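/- Each of the following seven polynomials in ℚ[β₁,β₂,β₃,δ₁,δ₂] lies in the ideal I, is anti-invariant under W (i.e. w·P = sgn(w)·P for all w ∈ W), and is divisible by Δ in ℚ[β₁,β₂,β₃,δ₁,δ₂]: P₁ = Δ·(β₁+β₂+β₃−δ₁−δ₂); P₂ = Σ_{i=1}^{3}(βᵢ−βᵢ₊₁)(βᵢ−δ₁)³(βᵢ₊₁−δ₁)³ − Σ_{i=1}^{3}(βᵢ−βᵢ₊₁)(βᵢ−δ₂)³(βᵢ₊₁−δ₂)³; P₃ = Σ_{i=1}^{3}δ₁(βᵢ−βᵢ₊₁)(βᵢ−δ₁)³(βᵢ₊₁−δ₁)³ − Σ_{i=1}^{3}δ₂(βᵢ−βᵢ₊₁)(βᵢ−δ₂)³(βᵢ₊₁−δ₂)³; P₄ = Σ_{i=1}^{3}(βᵢ²−βᵢ₊₁²)(βᵢ−δ₁)³(βᵢ₊₁−δ₁)³ − Σ_{i=1}^{3}(βᵢ²−βᵢ₊₁²)(βᵢ−δ₂)³(βᵢ₊₁−δ₂)³; P₅ = Σ_{i=1}^{3}δ₁(βᵢ²−βᵢ₊₁²)(βᵢ−δ₁)³(βᵢ₊₁−δ₁)³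 − Σ_{i=1}^{3}δ₂(βᵢ²−βᵢ₊₁²)(βᵢ−δ₂)³(βᵢ₊₁−δ₂)³; P₆ = Σ_{i=1}^{3}(βᵢ−βᵢ₊₁)(βᵢ₊₂−δ₁)³(βᵢ₊₂−δ₂)³(δ₁−δ₂); P₇ = (β₁−β₂)(β₂−β₃)(β₃−β₁)·(Σ_{i=1}^{3}(βᵢ−δ₁)³(βᵢ₊₁−δ₁)³ − Σ_{i=1}^{3}(βᵢ−δ₂)³(βᵢ₊₁−δ₂)³). -/
import Mathlib


open MvPolynomial

noncomputable section

/-- The polynomial ring ℚ[β₁,β₂,β₃,δ₁,δ₂], with the β-variables indexed by `Fin 3`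
and the δ-variables indexed by `Fin 2`. -/
abbrev P5 := MvPolynomial (Fin 3 ⊕ Fin 2) ℚ

def β (i : Fin 3) : P5 := X (Sum.inl i)

def δ (k : Fin 2) : P5 := X (Sum.inr k)

/-- Δ = (β₁−β₂)(β₁−β₃)(β₂−β₃)(δ₁−δ₂). -/
def Δ : P5 := (β 0 - β 1) * (β 0 - β 2) * (β 1 - β 2) * (δ 0 - δ 1)

/-- The ideal I generated by β₁+β₂+β₃−δ₁−δ₂, the six polynomials
(βᵢ−δₖ)³(βⱼ−δₖ)³ (i<j, k=1,2) and the three polynomials (βᵢ−δ₁)³(βᵢ−δ₂)³. -/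
def I : Ideal P5 := Ideal.span
  { β 0 + β 1 + β 2 - δ 0 - δ 1,
    (β 0 - δ 0) ^ 3 * (β 1 - δ 0) ^ 3, (β 0 - δ 0) ^ 3 * (β 2 - δ 0) ^ 3,
    (β 1 - δ 0) ^ 3 * (β 2 - δ 0) ^ 3,
    (β 0 - δ 1) ^ 3 * (β 1 - δ 1) ^ 3, (β 0 - δ 1) ^ 3 * (β 2 - δ 1) ^ 3,
    (β 1 - δ 1) ^ 3 * (β 2 - δ 1) ^ 3,
    (β 0 - δ 0) ^ 3 * (β 0 - δ 1) ^ 3, (β 1 - δ 0) ^ 3 * (β 1 - δ 1) ^ 3,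
    (β 2 - δ 0) ^ 3 * (β 2 - δ 1) ^ 3 }

def P₁ : P5 := Δ * (β 0 + β 1 + β 2 - δ 0 - δ 1)

def P₂ : P5 :=
  (∑ i : Fin 3, (β i - β (i + 1)) * (β i - δ 0) ^ 3 * (β (i + 1) - δ 0) ^ 3) -
    ∑ i : Fin 3, (β i - β (i + 1)) * (β i - δ 1) ^ 3 * (β (i + 1) - δ 1) ^ 3

def P₃ : P5 :=
  (∑ i : Fin 3, δ 0 * (β i - β (i + 1)) * (β i - δ 0) ^ 3 * (β (i + 1) - δ 0) ^ 3) -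
    ∑ i : Fin 3, δ 1 * (β i - β (i + 1)) * (β i - δ 1) ^ 3 * (β (i + 1) - δ 1) ^ 3

def P₄ : P5 :=
  (∑ i : Fin 3, (β i ^ 2 - β (i + 1) ^ 2) * (β i - δ 0) ^ 3 * (β (i + 1) - δ 0) ^ 3) -
    ∑ i : Fin 3, (β i ^ 2 - β (i + 1) ^ 2) * (β i - δ 1) ^ 3 * (β (i + 1) - δ 1) ^ 3

def P₅ : P5 :=
  (∑ i : Fin 3, δ 0 * (β i ^ 2 - β (i + 1) ^ 2) * (β i - δ 0) ^ 3 * (β (i + 1) - δ 0) ^ 3) -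
    ∑ i : Fin 3, δ 1 * (β i ^ 2 - β (i + 1) ^ 2) * (β i - δ 1) ^ 3 * (β (i + 1) - δ 1) ^ 3

def P₆ : P5 :=
  ∑ i : Fin 3, (β i - β (i + 1)) * (β (i + 2) - δ 0) ^ 3 * (β (i + 2) - δ 1) ^ 3 * (δ 0 - δ 1)

def P₇ : P5 :=
  (β 0 - β 1) * (β 1 - β 2) * (β 2 - β 0) *
    ((∑ i : Fin 3, (β i - δ 0) ^ 3 * (β (i + 1) - δ 0) ^ 3) -
      ∑ i : Fin 3, (β i - δ 1) ^ 3 * (β (i + 1) - δ 1) ^ 3)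

set_option maxHeartbeats 2000000

def Q1 : P5 :=
  (1 : P5) * β 0 + (1 : P5) * β 1 + (1 : P5) * β 2 + (-1 : P5) * δ 0 + (-1 : P5) * δ 1

def Q2 : P5 :=
  (-3 : P5) * β 0 ^ 2 * β 1 + (-3 : P5) * β 0 ^ 2 * β 2 + (3 : P5) * β 0 ^ 2 * δ 0 + (3 : P5) * β 0 ^ 2 * δ 1 + (-3 : P5) * β 0 * β 1 ^ 2 + (-6 : P5) * β 0 * β 1 * β 2 + (9 : P5) * β 0 * β 1 * δ 0 + (9 : P5) * β 0 * β 1 * δ 1 + (-3 : P5) * β 0 * β 2 ^ 2 + (9 : P5) * β 0 * β 2 * δ 0 + (9 : P5) * β 0 * β 2 * δ 1 + (-8 : P5) * β 0 * δ 0 ^ 2 + (-8 : P5) * β 0 * δ 0 * δ 1 + (-8 : P5) * β 0 * δ 1 ^ 2 + (-3 : P5) * β 1 ^ 2 * β 2 + (3 : P5) * β 1 ^ 2 * δ 0 + (3 : P5) * β 1 ^ 2 * δ 1 + (-3 : P5) * β 1 * β 2 ^ 2 + (9 : P5) * β 1 * β 2 * δ 0 + (9 : P5) * β 1 * β 2 *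 δ 1 + (-8 : P5) * β 1 * δ 0 ^ 2 + (-8 : P5) * β 1 * δ 0 * δ 1 + (-8 : P5) * β 1 * δ 1 ^ 2 + (3 : P5) * β 2 ^ 2 * δ 0 + (3 : P5) * β 2 ^ 2 * δ 1 + (-8 : P5) * β 2 * δ 0 ^ 2 + (-8 : P5) * β 2 * δ 0 * δ 1 + (-8 : P5) * β 2 * δ 1 ^ 2 + (6 : P5) * δ 0 ^ 3 + (6 : P5) * δ 0 ^ 2 * δ 1 + (6 : P5) * δ 0 * δ 1 ^ 2 + (6 : P5) * δ 1 ^ 3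

def Q3 : P5 :=
  (1 : P5) * β 0 ^ 2 * β 1 ^ 2 + (1 : P5) * β 0 ^ 2 * β 1 * β 2 + (-3 : P5) * β 0 ^ 2 * β 1 * δ 0 + (-3 : P5) * β 0 ^ 2 * β 1 * δ 1 + (1 : P5) * β 0 ^ 2 * β 2 ^ 2 + (-3 : P5) * β 0 ^ 2 * β 2 * δ 0 + (-3 : P5) * β 0 ^ 2 * β 2 * δ 1 + (3 : P5) * β 0 ^ 2 * δ 0 ^ 2 + (3 : P5) * β 0 ^ 2 * δ 0 * δ 1 + (3 : P5) * β 0 ^ 2 * δ 1 ^ 2 + (1 : P5) * β 0 * β 1 ^ 2 * β 2 + (-3 : P5) * β 0 * β 1 ^ 2 * δ 0 + (-3 : P5) * β 0 * β 1 ^ 2 * δ 1 + (1 : P5) * β 0 * β 1 * β 2 ^ 2 + (-6 : P5) * β 0 * β 1 * β 2 * δ 0 + (-6 : P5) * β 0 * β 1 * β 2 * δ 1 + (9 : P5) * β 0 * β 1 * δ 0 ^ 2 + (9 : P5) * β 0 * β 1 * δ 0 * δ 1 + (9 : P5) * β 0 * β 1 * δ 1 ^ 2 + (-3 : P5) * β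 0 * β 2 ^ 2 * δ 0 + (-3 : P5) * β 0 * β 2 ^ 2 * δ 1 + (9 : P5) * β 0 * β 2 * δ 0 ^ 2 + (9 : P5) * β 0 * β 2 * δ 0 * δ 1 + (9 : P5) * β 0 * β 2 * δ 1 ^ 2 + (-8 : P5) * β 0 * δ 0 ^ 3 + (-8 : P5) * β 0 * δ 0 ^ 2 * δ 1 + (-8 : P5) * β 0 * δ 0 * δ 1 ^ 2 + (-8 : P5) * β 0 * δ 1 ^ 3 + (1 : P5) * β 1 ^ 2 * β 2 ^ 2 + (-3 : P5) * β 1 ^ 2 * β 2 * δ 0 + (-3 : P5) * β 1 ^ 2 * β 2 * δ 1 + (3 : P5) * β 1 ^ 2 * δ 0 ^ 2 + (3 : P5) * β 1 ^ 2 * δ 0 * δ 1 + (3 : P5) * β 1 ^ 2 * δ 1 ^ 2 + (-3 : P5) * β 1 * β 2 ^ 2 * δ 0 + (-3 : P5) * β 1 * β 2 ^ 2 * δ 1 + (9 : P5) * β 1 * β 2 * δ 0 ^ 2 + (9 : P5) * β 1 * β 2 * δ 0 * δ 1 + (9 : P5) * β 1 * β 2 * δ 1 ^ 2 + (-8 :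 P5) * β 1 * δ 0 ^ 3 + (-8 : P5) * β 1 * δ 0 ^ 2 * δ 1 + (-8 : P5) * β 1 * δ 0 * δ 1 ^ 2 + (-8 : P5) * β 1 * δ 1 ^ 3 + (3 : P5) * β 2 ^ 2 * δ 0 ^ 2 + (3 : P5) * β 2 ^ 2 * δ 0 * δ 1 + (3 : P5) * β 2 ^ 2 * δ 1 ^ 2 + (-8 : P5) * β 2 * δ 0 ^ 3 + (-8 : P5) * β 2 * δ 0 ^ 2 * δ 1 + (-8 : P5) * β 2 * δ 0 * δ 1 ^ 2 + (-8 : P5) * β 2 * δ 1 ^ 3 + (6 : P5) * δ 0 ^ 4 + (6 : P5) * δ 0 ^ 3 * δ 1 + (6 : P5) * δ 0 ^ 2 * δ 1 ^ 2 + (6 : P5) * δ 0 * δ 1 ^ 3 + (6 : P5) * δ 1 ^ 4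

def Q4 : P5 :=
  (-3 : P5) * β 0 ^ 3 * β 1 + (-3 : P5) * β 0 ^ 3 * β 2 + (3 : P5) * β 0 ^ 3 * δ 0 + (3 : P5) * β 0 ^ 3 * δ 1 + (-6 : P5) * β 0 ^ 2 * β 1 ^ 2 + (-9 : P5) * β 0 ^ 2 * β 1 * β 2 + (12 : P5) * β 0 ^ 2 * β 1 * δ 0 + (12 : P5) * β 0 ^ 2 * β 1 * δ 1 + (-6 : P5) * β 0 ^ 2 * β 2 ^ 2 + (12 : P5) * β 0 ^ 2 * β 2 * δ 0 + (12 : P5) * β 0 ^ 2 * β 2 * δ 1 + (-9 : P5) * β 0 ^ 2 * δ 0 ^ 2 + (-9 : P5) * β 0 ^ 2 * δ 0 * δ 1 + (-9 : P5) * β 0 ^ 2 * δ 1 ^ 2 + (-3 : P5) * β 0 * β 1 ^ 3 + (-9 : P5) * β 0 * β 1 ^ 2 * β 2 + (12 : P5) * β 0 * β 1 ^ 2 * δ 0 + (12 : P5) * β 0 * β 1 ^ 2 * δ 1 + (-9 : P5) * β 0 * β 1 * β 2 ^ 2 + (21 : P5) * β 0 * β 1 * β 2 * δ 0 + (21 :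 P5) * β 0 * β 1 * β 2 * δ 1 + (-17 : P5) * β 0 * β 1 * δ 0 ^ 2 + (-17 : P5) * β 0 * β 1 * δ 0 * δ 1 + (-17 : P5) * β 0 * β 1 * δ 1 ^ 2 + (-3 : P5) * β 0 * β 2 ^ 3 + (12 : P5) * β 0 * β 2 ^ 2 * δ 0 + (12 : P5) * β 0 * β 2 ^ 2 * δ 1 + (-17 : P5) * β 0 * β 2 * δ 0 ^ 2 + (-17 : P5) * β 0 * β 2 * δ 0 * δ 1 + (-17 : P5) * β 0 * β 2 * δ 1 ^ 2 + (9 : P5) * β 0 * δ 0 ^ 3 + (9 : P5) * β 0 * δ 0 ^ 2 * δ 1 + (9 : P5) * β 0 * δ 0 * δ 1 ^ 2 + (9 : P5) * β 0 * δ 1 ^ 3 + (-3 : P5) * β 1 ^ 3 * β 2 + (3 : P5) * β 1 ^ 3 * δ 0 + (3 : P5) * β 1 ^ 3 * δ 1 + (-6 : P5) * β 1 ^ 2 * β 2 ^ 2 + (12 : P5) * β 1 ^ 2 * β 2 * δ 0 + (12 : P5) * β 1 ^ 2 * β 2 * δ 1 + (-9 : P5) * β 1 ^ 2 * δ 0 ^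 2 + (-9 : P5) * β 1 ^ 2 * δ 0 * δ 1 + (-9 : P5) * β 1 ^ 2 * δ 1 ^ 2 + (-3 : P5) * β 1 * β 2 ^ 3 + (12 : P5) * β 1 * β 2 ^ 2 * δ 0 + (12 : P5) * β 1 * β 2 ^ 2 * δ 1 + (-17 : P5) * β 1 * β 2 * δ 0 ^ 2 + (-17 : P5) * β 1 * β 2 * δ 0 * δ 1 + (-17 : P5) * β 1 * β 2 * δ 1 ^ 2 + (9 : P5) * β 1 * δ 0 ^ 3 + (9 : P5) * β 1 * δ 0 ^ 2 * δ 1 + (9 : P5) * β 1 * δ 0 * δ 1 ^ 2 + (9 : P5) * β 1 * δ 1 ^ 3 + (3 : P5) * β 2 ^ 3 * δ 0 + (3 : P5) * β 2 ^ 3 * δ 1 + (-9 : P5) * β 2 ^ 2 * δ 0 ^ 2 + (-9 : P5) * β 2 ^ 2 * δ 0 * δ 1 + (-9 : P5) * β 2 ^ 2 * δ 1 ^ 2 + (9 : P5) * β 2 * δ 0 ^ 3 + (9 : P5) * β 2 * δ 0 ^ 2 * δ 1 + (9 : P5) * β 2 * δ 0 * δ 1 ^ 2 + (9 : P5) * β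 2 * δ 1 ^ 3 + (-3 : P5) * δ 0 ^ 4 + (-3 : P5) * δ 0 ^ 3 * δ 1 + (-3 : P5) * δ 0 ^ 2 * δ 1 ^ 2 + (-3 : P5) * δ 0 * δ 1 ^ 3 + (-3 : P5) * δ 1 ^ 4

def Q5 : P5 :=
  (1 : P5) * β 0 ^ 3 * β 1 ^ 2 + (1 : P5) * β 0 ^ 3 * β 1 * β 2 + (-3 : P5) * β 0 ^ 3 * β 1 * δ 0 + (-3 : P5) * β 0 ^ 3 * β 1 * δ 1 + (1 : P5) * β 0 ^ 3 * β 2 ^ 2 + (-3 : P5) * β 0 ^ 3 * β 2 * δ 0 + (-3 : P5) * β 0 ^ 3 * β 2 * δ 1 + (3 : P5) * β 0 ^ 3 * δ 0 ^ 2 + (3 : P5) * β 0 ^ 3 * δ 0 * δ 1 + (3 : P5) * β 0 ^ 3 * δ 1 ^ 2 + (1 : P5) * β 0 ^ 2 * β 1 ^ 3 + (2 : P5) * β 0 ^ 2 * β 1 ^ 2 * β 2 + (-6 : P5) * β 0 ^ 2 * β 1 ^ 2 * δ 0 + (-6 : P5) * β 0 ^ 2 * β 1 ^ 2 * δ 1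 + (2 : P5) * β 0 ^ 2 * β 1 * β 2 ^ 2 + (-9 : P5) * β 0 ^ 2 * β 1 * β 2 * δ 0 + (-9 : P5) * β 0 ^ 2 * β 1 * β 2 * δ 1 + (12 : P5) * β 0 ^ 2 * β 1 * δ 0 ^ 2 + (12 : P5) * β 0 ^ 2 * β 1 * δ 0 * δ 1 + (12 : P5) * β 0 ^ 2 * β 1 * δ 1 ^ 2 + (1 : P5) * β 0 ^ 2 * β 2 ^ 3 + (-6 : P5) * β 0 ^ 2 * β 2 ^ 2 * δ 0 + (-6 : P5) * β 0 ^ 2 * β 2 ^ 2 * δ 1 + (12 : P5) * β 0 ^ 2 * β 2 * δ 0 ^ 2 + (12 : P5) * β 0 ^ 2 * β 2 * δ 0 * δ 1 + (12 : P5) * β 0 ^ 2 * β 2 * δ 1 ^ 2 + (-9 : P5) * β 0 ^ 2 * δ 0 ^ 3 + (-9 : P5) * β 0 ^ 2 * δ 0 ^ 2 * δ 1 + (-9 : P5) * β 0 ^ 2 * δ 0 * δ 1 ^ 2 + (-9 : P5) * β 0 ^ 2 * δ 1 ^ 3 + (1 : P5) * β 0 * β 1 ^ 3 * β 2 + (-3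 : P5) * β 0 * β 1 ^ 3 * δ 0 + (-3 : P5) * β 0 * β 1 ^ 3 * δ 1 + (2 : P5) * β 0 * β 1 ^ 2 * β 2 ^ 2 + (-9 : P5) * β 0 * β 1 ^ 2 * β 2 * δ 0 + (-9 : P5) * β 0 * β 1 ^ 2 * β 2 * δ 1 + (12 : P5) * β 0 * β 1 ^ 2 * δ 0 ^ 2 + (12 : P5) * β 0 * β 1 ^ 2 * δ 0 * δ 1 + (12 : P5) * β 0 * β 1 ^ 2 * δ 1 ^ 2 + (1 : P5) * β 0 * β 1 * β 2 ^ 3 + (-9 : P5) * β 0 * β 1 * β 2 ^ 2 * δ 0 + (-9 : P5) * β 0 * β 1 * β 2 ^ 2 * δ 1 + (21 : P5) * β 0 * β 1 * β 2 * δ 0 ^ 2 + (21 : P5) * β 0 * β 1 * β 2 * δ 0 * δ 1 + (21 : P5) * β 0 * β 1 * β 2 * δ 1 ^ 2 + (-17 : P5) * β 0 * β 1 * δ 0 ^ 3 + (-17 : P5) * β 0 * β 1 * δ 0 ^ 2 * δ 1 + (-17 : P5) * β 0 * β 1 * δ 0 * δ 1 ^ 2 + (-17 : P5) * β 0 * β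 1 * δ 1 ^ 3 + (-3 : P5) * β 0 * β 2 ^ 3 * δ 0 + (-3 : P5) * β 0 * β 2 ^ 3 * δ 1 + (12 : P5) * β 0 * β 2 ^ 2 * δ 0 ^ 2 + (12 : P5) * β 0 * β 2 ^ 2 * δ 0 * δ 1 + (12 : P5) * β 0 * β 2 ^ 2 * δ 1 ^ 2 + (-17 : P5) * β 0 * β 2 * δ 0 ^ 3 + (-17 : P5) * β 0 * β 2 * δ 0 ^ 2 * δ 1 + (-17 : P5) * β 0 * β 2 * δ 0 * δ 1 ^ 2 + (-17 : P5) * β 0 * β 2 * δ 1 ^ 3 + (9 : P5) * β 0 * δ 0 ^ 4 + (9 : P5) * β 0 * δ 0 ^ 3 * δ 1 + (9 : P5) * β 0 * δ 0 ^ 2 * δ 1 ^ 2 + (9 : P5) * β 0 * δ 0 * δ 1 ^ 3 + (9 : P5) * β 0 * δ 1 ^ 4 + (1 : P5) * β 1 ^ 3 * β 2 ^ 2 + (-3 : P5) * β 1 ^ 3 * β 2 * δ 0 + (-3 : P5) * β 1 ^ 3 * β 2 * δ 1 + (3 : P5) * β 1 ^ 3 * δ 0 ^ 2 + (3 : P5)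 * β 1 ^ 3 * δ 0 * δ 1 + (3 : P5) * β 1 ^ 3 * δ 1 ^ 2 + (1 : P5) * β 1 ^ 2 * β 2 ^ 3 + (-6 : P5) * β 1 ^ 2 * β 2 ^ 2 * δ 0 + (-6 : P5) * β 1 ^ 2 * β 2 ^ 2 * δ 1 + (12 : P5) * β 1 ^ 2 * β 2 * δ 0 ^ 2 + (12 : P5) * β 1 ^ 2 * β 2 * δ 0 * δ 1 + (12 : P5) * β 1 ^ 2 * β 2 * δ 1 ^ 2 + (-9 : P5) * β 1 ^ 2 * δ 0 ^ 3 + (-9 : P5) * β 1 ^ 2 * δ 0 ^ 2 * δ 1 + (-9 : P5) * β 1 ^ 2 * δ 0 * δ 1 ^ 2 + (-9 : P5) * β 1 ^ 2 * δ 1 ^ 3 + (-3 : P5) * β 1 * β 2 ^ 3 * δ 0 + (-3 : P5) * β 1 * β 2 ^ 3 * δ 1 + (12 : P5) * β 1 * β 2 ^ 2 * δ 0 ^ 2 + (12 : P5) * β 1 * β 2 ^ 2 * δ 0 * δ 1 + (12 : P5) * β 1 * β 2 ^ 2 * δ 1 ^ 2 + (-17 : P5) * β 1 * β 2 * δ 0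 ^ 3 + (-17 : P5) * β 1 * β 2 * δ 0 ^ 2 * δ 1 + (-17 : P5) * β 1 * β 2 * δ 0 * δ 1 ^ 2 + (-17 : P5) * β 1 * β 2 * δ 1 ^ 3 + (9 : P5) * β 1 * δ 0 ^ 4 + (9 : P5) * β 1 * δ 0 ^ 3 * δ 1 + (9 : P5) * β 1 * δ 0 ^ 2 * δ 1 ^ 2 + (9 : P5) * β 1 * δ 0 * δ 1 ^ 3 + (9 : P5) * β 1 * δ 1 ^ 4 + (3 : P5) * β 2 ^ 3 * δ 0 ^ 2 + (3 : P5) * β 2 ^ 3 * δ 0 * δ 1 + (3 : P5) * β 2 ^ 3 * δ 1 ^ 2 + (-9 : P5) * β 2 ^ 2 * δ 0 ^ 3 + (-9 : P5) * β 2 ^ 2 * δ 0 ^ 2 * δ 1 + (-9 : P5) * β 2 ^ 2 * δ 0 * δ 1 ^ 2 + (-9 : P5) * β 2 ^ 2 * δ 1 ^ 3 + (9 : P5) * β 2 * δ 0 ^ 4 + (9 : P5) * β 2 * δ 0 ^ 3 * δ 1 + (9 : P5) * β 2 * δ 0 ^ 2 * δ 1 ^ 2 + (9 : P5) * β 2 *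 δ 0 * δ 1 ^ 3 + (9 : P5) * β 2 * δ 1 ^ 4 + (-3 : P5) * δ 0 ^ 5 + (-3 : P5) * δ 0 ^ 4 * δ 1 + (-3 : P5) * δ 0 ^ 3 * δ 1 ^ 2 + (-3 : P5) * δ 0 ^ 2 * δ 1 ^ 3 + (-3 : P5) * δ 0 * δ 1 ^ 4 + (-3 : P5) * δ 1 ^ 5

def Q6 : P5 :=
  (1 : P5) * β 0 ^ 4 + (1 : P5) * β 0 ^ 3 * β 1 + (1 : P5) * β 0 ^ 3 * β 2 + (-3 : P5) * β 0 ^ 3 * δ 0 + (-3 : P5) * β 0 ^ 3 * δ 1 + (1 : P5) * β 0 ^ 2 * β 1 ^ 2 + (1 : P5) * β 0 ^ 2 * β 1 * β 2 + (-3 : P5) * β 0 ^ 2 * β 1 * δ 0 + (-3 : P5) * β 0 ^ 2 * β 1 * δ 1 + (1 : P5) * β 0 ^ 2 * β 2 ^ 2 + (-3 : P5) * β 0 ^ 2 * β 2 * δ 0 + (-3 : P5) * β 0 ^ 2 * β 2 * δ 1 + (3 : P5) * β 0 ^ 2 * δ 0 ^ 2 + (9 : P5) * β 0 ^ 2 *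 δ 0 * δ 1 + (3 : P5) * β 0 ^ 2 * δ 1 ^ 2 + (1 : P5) * β 0 * β 1 ^ 3 + (1 : P5) * β 0 * β 1 ^ 2 * β 2 + (-3 : P5) * β 0 * β 1 ^ 2 * δ 0 + (-3 : P5) * β 0 * β 1 ^ 2 * δ 1 + (1 : P5) * β 0 * β 1 * β 2 ^ 2 + (-3 : P5) * β 0 * β 1 * β 2 * δ 0 + (-3 : P5) * β 0 * β 1 * β 2 * δ 1 + (3 : P5) * β 0 * β 1 * δ 0 ^ 2 + (9 : P5) * β 0 * β 1 * δ 0 * δ 1 + (3 : P5) * β 0 * β 1 * δ 1 ^ 2 + (1 : P5) * β 0 * β 2 ^ 3 + (-3 : P5) * β 0 * β 2 ^ 2 * δ 0 + (-3 : P5) * β 0 * β 2 ^ 2 * δ 1 + (3 : P5) * β 0 * β 2 * δ 0 ^ 2 + (9 : P5) * β 0 * β 2 * δ 0 * δ 1 + (3 : P5) * β 0 * β 2 * δ 1 ^ 2 + (-1 : P5) * β 0 * δ 0 ^ 3 + (-9 : P5) * β 0 * δ 0 ^ 2 * δ 1 + (-9 : P5) * β 0 * δ 0 * δ 1 ^ 2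 + (-1 : P5) * β 0 * δ 1 ^ 3 + (1 : P5) * β 1 ^ 4 + (1 : P5) * β 1 ^ 3 * β 2 + (-3 : P5) * β 1 ^ 3 * δ 0 + (-3 : P5) * β 1 ^ 3 * δ 1 + (1 : P5) * β 1 ^ 2 * β 2 ^ 2 + (-3 : P5) * β 1 ^ 2 * β 2 * δ 0 + (-3 : P5) * β 1 ^ 2 * β 2 * δ 1 + (3 : P5) * β 1 ^ 2 * δ 0 ^ 2 + (9 : P5) * β 1 ^ 2 * δ 0 * δ 1 + (3 : P5) * β 1 ^ 2 * δ 1 ^ 2 + (1 : P5) * β 1 * β 2 ^ 3 + (-3 : P5) * β 1 * β 2 ^ 2 * δ 0 + (-3 : P5) * β 1 * β 2 ^ 2 * δ 1 + (3 : P5) * β 1 * β 2 * δ 0 ^ 2 + (9 : P5) * β 1 * β 2 * δ 0 * δ 1 + (3 : P5) * β 1 * β 2 * δ 1 ^ 2 + (-1 : P5) * β 1 * δ 0 ^ 3 + (-9 : P5) * β 1 * δ 0 ^ 2 * δ 1 + (-9 : P5) * β 1 * δ 0 * δ 1 ^ 2 + (-1 : P5) * β 1 * δ 1 ^ 3 +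 (1 : P5) * β 2 ^ 4 + (-3 : P5) * β 2 ^ 3 * δ 0 + (-3 : P5) * β 2 ^ 3 * δ 1 + (3 : P5) * β 2 ^ 2 * δ 0 ^ 2 + (9 : P5) * β 2 ^ 2 * δ 0 * δ 1 + (3 : P5) * β 2 ^ 2 * δ 1 ^ 2 + (-1 : P5) * β 2 * δ 0 ^ 3 + (-9 : P5) * β 2 * δ 0 ^ 2 * δ 1 + (-9 : P5) * β 2 * δ 0 * δ 1 ^ 2 + (-1 : P5) * β 2 * δ 1 ^ 3 + (3 : P5) * δ 0 ^ 3 * δ 1 + (9 : P5) * δ 0 ^ 2 * δ 1 ^ 2 + (3 : P5) * δ 0 * δ 1 ^ 3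

def Q7 : P5 :=
  (3 : P5) * β 0 ^ 3 * β 1 ^ 2 + (-3 : P5) * β 0 ^ 3 * β 1 * δ 0 + (-3 : P5) * β 0 ^ 3 * β 1 * δ 1 + (3 : P5) * β 0 ^ 3 * β 2 ^ 2 + (-3 : P5) * β 0 ^ 3 * β 2 * δ 0 + (-3 : P5) * β 0 ^ 3 * β 2 * δ 1 + (2 : P5) * β 0 ^ 3 * δ 0 ^ 2 + (2 : P5) * β 0 ^ 3 * δ 0 * δ 1 + (2 : P5) * β 0 ^ 3 * δ 1 ^ 2 + (3 : P5) * β 0 ^ 2 * β 1 ^ 3 + (-9 : P5) * β 0 ^ 2 * β 1 ^ 2 * δ 0 + (-9 : P5) * β 0 ^ 2 * β 1 ^ 2 * δ 1 + (9 : P5) * β 0 ^ 2 * β 1 * δ 0 ^ 2 + (9 : P5) * β 0 ^ 2 * β 1 * δ 0 * δ 1 + (9 : P5) * β 0 ^ 2 * β 1 * δ 1 ^ 2 + (3 : P5) * β 0 ^ 2 * β 2 ^ 3 + (-9 : P5) * β 0 ^ 2 * β 2 ^ 2 * δ 0 + (-9 : P5) * β 0 ^ 2 * β 2 ^ 2 *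 δ 1 + (9 : P5) * β 0 ^ 2 * β 2 * δ 0 ^ 2 + (9 : P5) * β 0 ^ 2 * β 2 * δ 0 * δ 1 + (9 : P5) * β 0 ^ 2 * β 2 * δ 1 ^ 2 + (-6 : P5) * β 0 ^ 2 * δ 0 ^ 3 + (-6 : P5) * β 0 ^ 2 * δ 0 ^ 2 * δ 1 + (-6 : P5) * β 0 ^ 2 * δ 0 * δ 1 ^ 2 + (-6 : P5) * β 0 ^ 2 * δ 1 ^ 3 + (-3 : P5) * β 0 * β 1 ^ 3 * δ 0 + (-3 : P5) * β 0 * β 1 ^ 3 * δ 1 + (9 : P5) * β 0 * β 1 ^ 2 * δ 0 ^ 2 + (9 : P5) * β 0 * β 1 ^ 2 * δ 0 * δ 1 + (9 : P5) * β 0 * β 1 ^ 2 * δ 1 ^ 2 + (-9 : P5) * β 0 * β 1 * δ 0 ^ 3 + (-9 : P5) * β 0 * β 1 * δ 0 ^ 2 * δ 1 + (-9 : P5) * β 0 * β 1 * δ 0 * δ 1 ^ 2 + (-9 : P5) * β 0 * β 1 * δ 1 ^ 3 + (-3 : P5) * β 0 * β 2 ^ 3 * δ 0 + (-3 : P5)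 * β 0 * β 2 ^ 3 * δ 1 + (9 : P5) * β 0 * β 2 ^ 2 * δ 0 ^ 2 + (9 : P5) * β 0 * β 2 ^ 2 * δ 0 * δ 1 + (9 : P5) * β 0 * β 2 ^ 2 * δ 1 ^ 2 + (-9 : P5) * β 0 * β 2 * δ 0 ^ 3 + (-9 : P5) * β 0 * β 2 * δ 0 ^ 2 * δ 1 + (-9 : P5) * β 0 * β 2 * δ 0 * δ 1 ^ 2 + (-9 : P5) * β 0 * β 2 * δ 1 ^ 3 + (6 : P5) * β 0 * δ 0 ^ 4 + (6 : P5) * β 0 * δ 0 ^ 3 * δ 1 + (6 : P5) * β 0 * δ 0 ^ 2 * δ 1 ^ 2 + (6 : P5) * β 0 * δ 0 * δ 1 ^ 3 + (6 : P5) * β 0 * δ 1 ^ 4 + (3 : P5) * β 1 ^ 3 * β 2 ^ 2 + (-3 : P5) * β 1 ^ 3 * β 2 * δ 0 + (-3 : P5) * β 1 ^ 3 * β 2 * δ 1 + (2 : P5) * β 1 ^ 3 * δ 0 ^ 2 + (2 : P5) * β 1 ^ 3 * δ 0 * δ 1 + (2 : P5) * β 1 ^ 3 * δ 1 ^ 2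 + (3 : P5) * β 1 ^ 2 * β 2 ^ 3 + (-9 : P5) * β 1 ^ 2 * β 2 ^ 2 * δ 0 + (-9 : P5) * β 1 ^ 2 * β 2 ^ 2 * δ 1 + (9 : P5) * β 1 ^ 2 * β 2 * δ 0 ^ 2 + (9 : P5) * β 1 ^ 2 * β 2 * δ 0 * δ 1 + (9 : P5) * β 1 ^ 2 * β 2 * δ 1 ^ 2 + (-6 : P5) * β 1 ^ 2 * δ 0 ^ 3 + (-6 : P5) * β 1 ^ 2 * δ 0 ^ 2 * δ 1 + (-6 : P5) * β 1 ^ 2 * δ 0 * δ 1 ^ 2 + (-6 : P5) * β 1 ^ 2 * δ 1 ^ 3 + (-3 : P5) * β 1 * β 2 ^ 3 * δ 0 + (-3 : P5) * β 1 * β 2 ^ 3 * δ 1 + (9 : P5) * β 1 * β 2 ^ 2 * δ 0 ^ 2 + (9 : P5) * β 1 * β 2 ^ 2 * δ 0 * δ 1 + (9 : P5) * β 1 * β 2 ^ 2 * δ 1 ^ 2 + (-9 : P5) * β 1 * β 2 * δ 0 ^ 3 + (-9 : P5) * β 1 * β 2 * δ 0 ^ 2 * δ 1 + (-9 : P5)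 * β 1 * β 2 * δ 0 * δ 1 ^ 2 + (-9 : P5) * β 1 * β 2 * δ 1 ^ 3 + (6 : P5) * β 1 * δ 0 ^ 4 + (6 : P5) * β 1 * δ 0 ^ 3 * δ 1 + (6 : P5) * β 1 * δ 0 ^ 2 * δ 1 ^ 2 + (6 : P5) * β 1 * δ 0 * δ 1 ^ 3 + (6 : P5) * β 1 * δ 1 ^ 4 + (2 : P5) * β 2 ^ 3 * δ 0 ^ 2 + (2 : P5) * β 2 ^ 3 * δ 0 * δ 1 + (2 : P5) * β 2 ^ 3 * δ 1 ^ 2 + (-6 : P5) * β 2 ^ 2 * δ 0 ^ 3 + (-6 : P5) * β 2 ^ 2 * δ 0 ^ 2 * δ 1 + (-6 : P5) * β 2 ^ 2 * δ 0 * δ 1 ^ 2 + (-6 : P5) * β 2 ^ 2 * δ 1 ^ 3 + (6 : P5) * β 2 * δ 0 ^ 4 + (6 : P5) * β 2 * δ 0 ^ 3 * δ 1 + (6 : P5) * β 2 * δ 0 ^ 2 * δ 1 ^ 2 + (6 : P5) * β 2 * δ 0 * δ 1 ^ 3 + (6 : P5) * β 2 * δ 1 ^ 4 + (-3 : P5)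 * δ 0 ^ 5 + (-3 : P5) * δ 0 ^ 4 * δ 1 + (-3 : P5) * δ 0 ^ 3 * δ 1 ^ 2 + (-3 : P5) * δ 0 ^ 2 * δ 1 ^ 3 + (-3 : P5) * δ 0 * δ 1 ^ 4 + (-3 : P5) * δ 1 ^ 5


section Aux

@[local simp] lemma f31 : (0:Fin 3)+1 = 1 := rfl
@[local simp] lemma f32 : (1:Fin 3)+1 = 2 := rfl
@[local simp] lemma f33 : (2:Fin 3)+1 = 0 := rfl
@[local simp] lemma f34 : (0:Fin 3)+2 = 2 := rfl
@[local simp] lemma f35 : (1:Fin 3)+2 = 0 := rfl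
@[local simp] lemma f36 : (2:Fin 3)+2 = 1 := rfl

end Aux

/-- Anti-invariance predicate. -/
def Anti (P : P5) (σ : Equiv.Perm (Fin 3)) (τ : Equiv.Perm (Fin 2)) : Prop :=
  rename (Sum.map ⇑σ ⇑τ) P = ((Equiv.Perm.sign σ * Equiv.Perm.sign τ : ℤˣ) : ℤ) • P

lemma Anti.mul {P : P5} {σ σ' : Equiv.Perm (Fin 3)} {τ τ' : Equiv.Perm (Fin 2)}
    (h : Anti P σ τ) (h' : Anti P σ' τ') : Anti P (σ * σ') (τ * τ') := by
  unfold Anti at *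
  have hc : (Sum.map ⇑(σ * σ') ⇑(τ * τ') : Fin 3 ⊕ Fin 2 → Fin 3 ⊕ Fin 2) =
      Sum.map ⇑σ ⇑τ ∘ Sum.map ⇑σ' ⇑τ' := by
    funext x; cases x <;> rfl
  rw [hc, ← rename_rename, h', map_zsmul, h, smul_smul]
  congr 1
  simp only [map_mul, Units.val_mul]
  ring

lemma perm3_cases (σ : Equiv.Perm (Fin 3)) :
    σ = 1 ∨ σ = Equiv.swap 0 1 ∨ σ = Equiv.swap 1 2 ∨
    σ = Equiv.swap 0 1 * Equiv.swap 1 2 ∨ σ = Equiv.swap 1 2 * Equiv.swap 0 1 ∨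
    σ = Equiv.swap 0 1 * Equiv.swap 1 2 * Equiv.swap 0 1 := by
  revert σ; decide

lemma perm2_cases (τ : Equiv.Perm (Fin 2)) : τ = 1 ∨ τ = Equiv.swap 0 1 := by
  revert τ; decide

lemma anti_all {P : P5} (h1 : Anti P (Equiv.swap 0 1) 1) (h2 : Anti P (Equiv.swap 1 2) 1)
    (ht : Anti P 1 (Equiv.swap 0 1)) : ∀ σ τ, Anti P σ τ := by
  have e1 : Anti P 1 1 := by
    have := h1.mul h1
    simpa [Equiv.swap_mul_self] using this
  have hσ : ∀ σ, Anti P σ 1 := by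
    intro σ
    rcases perm3_cases σ with rfl | rfl | rfl | rfl | rfl | rfl
    · exact e1
    · exact h1
    · exact h2
    · simpa using h1.mul h2
    · simpa using h2.mul h1
    · simpa using (h1.mul h2).mul h1
  intro σ τ
  rcases perm2_cases τ with rfl | rfl
  · exact hσ σ
  · simpa using (hσ σ).mul ht

section SwapVals

@[local simp] lemma sA0 : Equiv.swap (0:Fin 3) 1 0 = 1 := by decide
@[local simp] lemma sA1 : Equiv.swap (0:Fin 3) 1 1 = 0 := by decide
@[local simp] lemma sA2 : Equiv.swap (0:Fin 3) 1 2 = 2 := by decide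
@[local simp] lemma sB0 : Equiv.swap (1:Fin 3) 2 0 = 0 := by decide
@[local simp] lemma sB1 : Equiv.swap (1:Fin 3) 2 1 = 2 := by decide
@[local simp] lemma sB2 : Equiv.swap (1:Fin 3) 2 2 = 1 := by decide
@[local simp] lemma sT0 : Equiv.swap (0:Fin 2) 1 0 = 1 := by decide
@[local simp] lemma sT1 : Equiv.swap (0:Fin 2) 1 1 = 0 := by decide

lemma sgnA : ((Equiv.Perm.sign (Equiv.swap (0:Fin 3) 1) *
    Equiv.Perm.sign (1 : Equiv.Perm (Fin 2)) : ℤˣ) : ℤ) = -1 := by decide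
lemma sgnB : ((Equiv.Perm.sign (Equiv.swap (1:Fin 3) 2) *
    Equiv.Perm.sign (1 : Equiv.Perm (Fin 2)) : ℤˣ) : ℤ) = -1 := by decide
lemma sgnT : ((Equiv.Perm.sign (1 : Equiv.Perm (Fin 3)) *
    Equiv.Perm.sign (Equiv.swap (0:Fin 2) 1) : ℤˣ) : ℤ) = -1 := by decide

end SwapVals

lemma antiA_1 : Anti P₁ (Equiv.swap 0 1) 1 := by
  unfold Anti
  rw [sgnA]
  simp only [P₁, Δ, β, δ, Fin.sum_univ_three, f31, f32, f33, f34, f35, f36,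
    map_sub, map_add, map_mul, map_pow, rename_X, Sum.map_inl, Sum.map_inr,
    sA0, sA1, sA2, sB0, sB1, sB2, sT0, sT1, Equiv.Perm.coe_one, id_eq,
    neg_smul, one_smul]
  ring

lemma antiB_1 : Anti P₁ (Equiv.swap 1 2) 1 := by
  unfold Anti
  rw [sgnB]
  simp only [P₁, Δ, β, δ, Fin.sum_univ_three, f31, f32, f33, f34, f35, f36,
    map_sub, map_add, map_mul, map_pow, rename_X, Sum.map_inl, Sum.map_inr,
    sA0, sA1, sA2, sB0, sB1, sB2, sT0, sT1, Equiv.Perm.coe_one, id_eq,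
    neg_smul, one_smul]
  ring

lemma antiT_1 : Anti P₁ 1 (Equiv.swap 0 1) := by
  unfold Anti
  rw [sgnT]
  simp only [P₁, Δ, β, δ, Fin.sum_univ_three, f31, f32, f33, f34, f35, f36,
    map_sub, map_add, map_mul, map_pow, rename_X, Sum.map_inl, Sum.map_inr,
    sA0, sA1, sA2, sB0, sB1, sB2, sT0, sT1, Equiv.Perm.coe_one, id_eq,
    neg_smul, one_smul]
  ring

lemma anti_1 : ∀ σ τ, Anti P₁ σ τ := anti_all antiA_1 antiB_1 antiT_1

lemma antiA_2 : Anti P₂ (Equiv.swap 0 1) 1 := by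
  unfold Anti
  rw [sgnA]
  simp only [P₂, Δ, β, δ, Fin.sum_univ_three, f31, f32, f33, f34, f35, f36,
    map_sub, map_add, map_mul, map_pow, rename_X, Sum.map_inl, Sum.map_inr,
    sA0, sA1, sA2, sB0, sB1, sB2, sT0, sT1, Equiv.Perm.coe_one, id_eq,
    neg_smul, one_smul]
  ring

lemma antiB_2 : Anti P₂ (Equiv.swap 1 2) 1 := by
  unfold Anti
  rw [sgnB]
  simp only [P₂, Δ, β, δ, Fin.sum_univ_three, f31, f32, f33, f34, f35, f36,
    map_sub, map_add, map_mul, map_pow, rename_X, Sum.map_inl, Sum.map_inr,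
    sA0, sA1, sA2, sB0, sB1, sB2, sT0, sT1, Equiv.Perm.coe_one, id_eq,
    neg_smul, one_smul]
  ring

lemma antiT_2 : Anti P₂ 1 (Equiv.swap 0 1) := by
  unfold Anti
  rw [sgnT]
  simp only [P₂, Δ, β, δ, Fin.sum_univ_three, f31, f32, f33, f34, f35, f36,
    map_sub, map_add, map_mul, map_pow, rename_X, Sum.map_inl, Sum.map_inr,
    sA0, sA1, sA2, sB0, sB1, sB2, sT0, sT1, Equiv.Perm.coe_one, id_eq,
    neg_smul, one_smul]
  ring

lemma anti_2 : ∀ σ τ, Anti P₂ σ τ := anti_all antiA_2 antiB_2 antiT_2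

lemma antiA_3 : Anti P₃ (Equiv.swap 0 1) 1 := by
  unfold Anti
  rw [sgnA]
  simp only [P₃, Δ, β, δ, Fin.sum_univ_three, f31, f32, f33, f34, f35, f36,
    map_sub, map_add, map_mul, map_pow, rename_X, Sum.map_inl, Sum.map_inr,
    sA0, sA1, sA2, sB0, sB1, sB2, sT0, sT1, Equiv.Perm.coe_one, id_eq,
    neg_smul, one_smul]
  ring

lemma antiB_3 : Anti P₃ (Equiv.swap 1 2) 1 := by
  unfold Anti
  rw [sgnB]
  simp only [P₃, Δ, β, δ, Fin.sum_univ_three, f31, f32, f33, f34, f35, f36,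
    map_sub, map_add, map_mul, map_pow, rename_X, Sum.map_inl, Sum.map_inr,
    sA0, sA1, sA2, sB0, sB1, sB2, sT0, sT1, Equiv.Perm.coe_one, id_eq,
    neg_smul, one_smul]
  ring

lemma antiT_3 : Anti P₃ 1 (Equiv.swap 0 1) := by
  unfold Anti
  rw [sgnT]
  simp only [P₃, Δ, β, δ, Fin.sum_univ_three, f31, f32, f33, f34, f35, f36,
    map_sub, map_add, map_mul, map_pow, rename_X, Sum.map_inl, Sum.map_inr,
    sA0, sA1, sA2, sB0, sB1, sB2, sT0, sT1, Equiv.Perm.coe_one, id_eq,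
    neg_smul, one_smul]
  ring

lemma anti_3 : ∀ σ τ, Anti P₃ σ τ := anti_all antiA_3 antiB_3 antiT_3

lemma antiA_4 : Anti P₄ (Equiv.swap 0 1) 1 := by
  unfold Anti
  rw [sgnA]
  simp only [P₄, Δ, β, δ, Fin.sum_univ_three, f31, f32, f33, f34, f35, f36,
    map_sub, map_add, map_mul, map_pow, rename_X, Sum.map_inl, Sum.map_inr,
    sA0, sA1, sA2, sB0, sB1, sB2, sT0, sT1, Equiv.Perm.coe_one, id_eq,
    neg_smul, one_smul]
  ring

lemma antiB_4 : Anti P₄ (Equiv.swap 1 2) 1 := by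
  unfold Anti
  rw [sgnB]
  simp only [P₄, Δ, β, δ, Fin.sum_univ_three, f31, f32, f33, f34, f35, f36,
    map_sub, map_add, map_mul, map_pow, rename_X, Sum.map_inl, Sum.map_inr,
    sA0, sA1, sA2, sB0, sB1, sB2, sT0, sT1, Equiv.Perm.coe_one, id_eq,
    neg_smul, one_smul]
  ring

lemma antiT_4 : Anti P₄ 1 (Equiv.swap 0 1) := by
  unfold Anti
  rw [sgnT]
  simp only [P₄, Δ, β, δ, Fin.sum_univ_three, f31, f32, f33, f34, f35, f36,
    map_sub, map_add, map_mul, map_pow, rename_X, Sum.map_inl, Sum.map_inr,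
    sA0, sA1, sA2, sB0, sB1, sB2, sT0, sT1, Equiv.Perm.coe_one, id_eq,
    neg_smul, one_smul]
  ring

lemma anti_4 : ∀ σ τ, Anti P₄ σ τ := anti_all antiA_4 antiB_4 antiT_4

lemma antiA_5 : Anti P₅ (Equiv.swap 0 1) 1 := by
  unfold Anti
  rw [sgnA]
  simp only [P₅, Δ, β, δ, Fin.sum_univ_three, f31, f32, f33, f34, f35, f36,
    map_sub, map_add, map_mul, map_pow, rename_X, Sum.map_inl, Sum.map_inr,
    sA0, sA1, sA2, sB0, sB1, sB2, sT0, sT1, Equiv.Perm.coe_one, id_eq,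
    neg_smul, one_smul]
  ring

lemma antiB_5 : Anti P₅ (Equiv.swap 1 2) 1 := by
  unfold Anti
  rw [sgnB]
  simp only [P₅, Δ, β, δ, Fin.sum_univ_three, f31, f32, f33, f34, f35, f36,
    map_sub, map_add, map_mul, map_pow, rename_X, Sum.map_inl, Sum.map_inr,
    sA0, sA1, sA2, sB0, sB1, sB2, sT0, sT1, Equiv.Perm.coe_one, id_eq,
    neg_smul, one_smul]
  ring

lemma antiT_5 : Anti P₅ 1 (Equiv.swap 0 1) := by
  unfold Anti
  rw [sgnT]
  simp only [P₅, Δ, β, δ, Fin.sum_univ_three, f31, f32, f33, f34, f35, f36,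
    map_sub, map_add, map_mul, map_pow, rename_X, Sum.map_inl, Sum.map_inr,
    sA0, sA1, sA2, sB0, sB1, sB2, sT0, sT1, Equiv.Perm.coe_one, id_eq,
    neg_smul, one_smul]
  ring

lemma anti_5 : ∀ σ τ, Anti P₅ σ τ := anti_all antiA_5 antiB_5 antiT_5

lemma antiA_6 : Anti P₆ (Equiv.swap 0 1) 1 := by
  unfold Anti
  rw [sgnA]
  simp only [P₆, Δ, β, δ, Fin.sum_univ_three, f31, f32, f33, f34, f35, f36,
    map_sub, map_add, map_mul, map_pow, rename_X, Sum.map_inl, Sum.map_inr,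
    sA0, sA1, sA2, sB0, sB1, sB2, sT0, sT1, Equiv.Perm.coe_one, id_eq,
    neg_smul, one_smul]
  ring

lemma antiB_6 : Anti P₆ (Equiv.swap 1 2) 1 := by
  unfold Anti
  rw [sgnB]
  simp only [P₆, Δ, β, δ, Fin.sum_univ_three, f31, f32, f33, f34, f35, f36,
    map_sub, map_add, map_mul, map_pow, rename_X, Sum.map_inl, Sum.map_inr,
    sA0, sA1, sA2, sB0, sB1, sB2, sT0, sT1, Equiv.Perm.coe_one, id_eq,
    neg_smul, one_smul]
  ring

lemma antiT_6 : Anti P₆ 1 (Equiv.swap 0 1) := by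
  unfold Anti
  rw [sgnT]
  simp only [P₆, Δ, β, δ, Fin.sum_univ_three, f31, f32, f33, f34, f35, f36,
    map_sub, map_add, map_mul, map_pow, rename_X, Sum.map_inl, Sum.map_inr,
    sA0, sA1, sA2, sB0, sB1, sB2, sT0, sT1, Equiv.Perm.coe_one, id_eq,
    neg_smul, one_smul]
  ring

lemma anti_6 : ∀ σ τ, Anti P₆ σ τ := anti_all antiA_6 antiB_6 antiT_6

lemma antiA_7 : Anti P₇ (Equiv.swap 0 1) 1 := by
  unfold Anti
  rw [sgnA]
  simp only [P₇, Δ, β, δ, Fin.sum_univ_three, f31, f32, f33, f34, f35, f36,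
    map_sub, map_add, map_mul, map_pow, rename_X, Sum.map_inl, Sum.map_inr,
    sA0, sA1, sA2, sB0, sB1, sB2, sT0, sT1, Equiv.Perm.coe_one, id_eq,
    neg_smul, one_smul]
  ring

lemma antiB_7 : Anti P₇ (Equiv.swap 1 2) 1 := by
  unfold Anti
  rw [sgnB]
  simp only [P₇, Δ, β, δ, Fin.sum_univ_three, f31, f32, f33, f34, f35, f36,
    map_sub, map_add, map_mul, map_pow, rename_X, Sum.map_inl, Sum.map_inr,
    sA0, sA1, sA2, sB0, sB1, sB2, sT0, sT1, Equiv.Perm.coe_one, id_eq,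
    neg_smul, one_smul]
  ring

lemma antiT_7 : Anti P₇ 1 (Equiv.swap 0 1) := by
  unfold Anti
  rw [sgnT]
  simp only [P₇, Δ, β, δ, Fin.sum_univ_three, f31, f32, f33, f34, f35, f36,
    map_sub, map_add, map_mul, map_pow, rename_X, Sum.map_inl, Sum.map_inr,
    sA0, sA1, sA2, sB0, sB1, sB2, sT0, sT1, Equiv.Perm.coe_one, id_eq,
    neg_smul, one_smul]
  ring

lemma anti_7 : ∀ σ τ, Anti P₇ σ τ := anti_all antiA_7 antiB_7 antiT_7

lemma div_1 : Δ ∣ P₁ := ⟨Q1, by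
  simp only [P₁, Δ, Q1, Fin.sum_univ_three, f31, f32, f33, f34, f35, f36]
  ring⟩

lemma div_2 : Δ ∣ P₂ := ⟨Q2, by
  simp only [P₂, Δ, Q2, Fin.sum_univ_three, f31, f32, f33, f34, f35, f36]
  ring⟩

lemma div_3 : Δ ∣ P₃ := ⟨Q3, by
  simp only [P₃, Δ, Q3, Fin.sum_univ_three, f31, f32, f33, f34, f35, f36]
  ring⟩

lemma div_4 : Δ ∣ P₄ := ⟨Q4, by
  simp only [P₄, Δ, Q4, Fin.sum_univ_three, f31, f32, f33, f34, f35, f36]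
  ring⟩

lemma div_5 : Δ ∣ P₅ := ⟨Q5, by
  simp only [P₅, Δ, Q5, Fin.sum_univ_three, f31, f32, f33, f34, f35, f36]
  ring⟩

lemma div_6 : Δ ∣ P₆ := ⟨Q6, by
  simp only [P₆, Δ, Q6, Fin.sum_univ_three, f31, f32, f33, f34, f35, f36]
  ring⟩

lemma div_7 : Δ ∣ P₇ := ⟨Q7, by
  simp only [P₇, Δ, Q7, Fin.sum_univ_three, f31, f32, f33, f34, f35, f36]
  ring⟩

lemma gen_mem (g : P5) (hg : g ∈ ({ β 0 + β 1 + β 2 - δ 0 - δ 1,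
    (β 0 - δ 0) ^ 3 * (β 1 - δ 0) ^ 3, (β 0 - δ 0) ^ 3 * (β 2 - δ 0) ^ 3,
    (β 1 - δ 0) ^ 3 * (β 2 - δ 0) ^ 3,
    (β 0 - δ 1) ^ 3 * (β 1 - δ 1) ^ 3, (β 0 - δ 1) ^ 3 * (β 2 - δ 1) ^ 3,
    (β 1 - δ 1) ^ 3 * (β 2 - δ 1) ^ 3,
    (β 0 - δ 0) ^ 3 * (β 0 - δ 1) ^ 3, (β 1 - δ 0) ^ 3 * (β 1 - δ 1) ^ 3,
    (β 2 - δ 0) ^ 3 * (β 2 - δ 1) ^ 3 } : Set P5)) : g ∈ I :=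
  Ideal.subset_span hg

lemma mem_1 : P₁ ∈ I := by
  have h : P₁ =
      (Δ) * (β 0 + β 1 + β 2 - δ 0 - δ 1) := by
    simp only [P₁]
  rw [h]
  exact (I.mul_mem_left (Δ) (gen_mem _ (by simp [Set.mem_insert_iff])))

lemma mem_2 : P₂ ∈ I := by
  have h : P₂ =
      (β 0 - β 1) * ((β 0 - δ 0) ^ 3 * (β 1 - δ 0) ^ 3) +
      (β 1 - β 2) * ((β 1 - δ 0) ^ 3 * (β 2 - δ 0) ^ 3) +
      (β 2 - β 0) * ((β 0 - δ 0) ^ 3 * (β 2 - δ 0) ^ 3) +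
      (-(β 0 - β 1)) * ((β 0 - δ 1) ^ 3 * (β 1 - δ 1) ^ 3) +
      (-(β 1 - β 2)) * ((β 1 - δ 1) ^ 3 * (β 2 - δ 1) ^ 3) +
      (-(β 2 - β 0)) * ((β 0 - δ 1) ^ 3 * (β 2 - δ 1) ^ 3) := by
    simp only [P₂, Δ, Fin.sum_univ_three, f31, f32, f33, f34, f35, f36]
    ring
  rw [h]
  exact add_mem (add_mem (add_mem (add_mem (add_mem ((I.mul_mem_left (β 0 - β 1) (gen_mem _ (by simp [Set.mem_insert_iff])))) ((I.mul_mem_left (β 1 - β 2) (gen_mem _ (by simp [Set.mem_insert_iff]))))) ((I.mul_mem_left (β 2 - β 0) (gen_mem _ (by simp [Set.mem_insert_iff]))))) ((I.mul_mem_left (-(β 0 - β 1)) (gen_mem _ (by simp [Set.mem_insert_iff]))))) ((I.mul_mem_left (-(β 1 - β 2)) (gen_mem _ (by simp [Set.mem_insert_iff]))))) ((I.mul_mem_left (-(β 2 - β 0)) (gen_mem _ (by simp [Set.mem_insert_iff]))))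

lemma mem_3 : P₃ ∈ I := by
  have h : P₃ =
      (δ 0 * (β 0 - β 1)) * ((β 0 - δ 0) ^ 3 * (β 1 - δ 0) ^ 3) +
      (δ 0 * (β 1 - β 2)) * ((β 1 - δ 0) ^ 3 * (β 2 - δ 0) ^ 3) +
      (δ 0 * (β 2 - β 0)) * ((β 0 - δ 0) ^ 3 * (β 2 - δ 0) ^ 3) +
      (-(δ 1 * (β 0 - β 1))) * ((β 0 - δ 1) ^ 3 * (β 1 - δ 1) ^ 3) +
      (-(δ 1 * (β 1 - β 2))) * ((β 1 - δ 1) ^ 3 * (β 2 - δ 1) ^ 3) +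
      (-(δ 1 * (β 2 - β 0))) * ((β 0 - δ 1) ^ 3 * (β 2 - δ 1) ^ 3) := by
    simp only [P₃, Δ, Fin.sum_univ_three, f31, f32, f33, f34, f35, f36]
    ring
  rw [h]
  exact add_mem (add_mem (add_mem (add_mem (add_mem ((I.mul_mem_left (δ 0 * (β 0 - β 1)) (gen_mem _ (by simp [Set.mem_insert_iff])))) ((I.mul_mem_left (δ 0 * (β 1 - β 2)) (gen_mem _ (by simp [Set.mem_insert_iff]))))) ((I.mul_mem_left (δ 0 * (β 2 - β 0)) (gen_mem _ (by simp [Set.mem_insert_iff]))))) ((I.mul_mem_left (-(δ 1 * (β 0 - β 1))) (gen_mem _ (by simp [Set.mem_insert_iff]))))) ((I.mul_mem_left (-(δ 1 * (β 1 - β 2))) (gen_mem _ (by simp [Set.mem_insert_iff]))))) ((I.mul_mem_left (-(δ 1 * (β 2 - β 0))) (gen_mem _ (by simp [Set.mem_insert_iff]))))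

lemma mem_4 : P₄ ∈ I := by
  have h : P₄ =
      (β 0 ^ 2 - β 1 ^ 2) * ((β 0 - δ 0) ^ 3 * (β 1 - δ 0) ^ 3) +
      (β 1 ^ 2 - β 2 ^ 2) * ((β 1 - δ 0) ^ 3 * (β 2 - δ 0) ^ 3) +
      (β 2 ^ 2 - β 0 ^ 2) * ((β 0 - δ 0) ^ 3 * (β 2 - δ 0) ^ 3) +
      (-(β 0 ^ 2 - β 1 ^ 2)) * ((β 0 - δ 1) ^ 3 * (β 1 - δ 1) ^ 3) +
      (-(β 1 ^ 2 - β 2 ^ 2)) * ((β 1 - δ 1) ^ 3 * (β 2 - δ 1) ^ 3) +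
      (-(β 2 ^ 2 - β 0 ^ 2)) * ((β 0 - δ 1) ^ 3 * (β 2 - δ 1) ^ 3) := by
    simp only [P₄, Δ, Fin.sum_univ_three, f31, f32, f33, f34, f35, f36]
    ring
  rw [h]
  exact add_mem (add_mem (add_mem (add_mem (add_mem ((I.mul_mem_left (β 0 ^ 2 - β 1 ^ 2) (gen_mem _ (by simp [Set.mem_insert_iff])))) ((I.mul_mem_left (β 1 ^ 2 - β 2 ^ 2) (gen_mem _ (by simp [Set.mem_insert_iff]))))) ((I.mul_mem_left (β 2 ^ 2 - β 0 ^ 2) (gen_mem _ (by simp [Set.mem_insert_iff]))))) ((I.mul_mem_left (-(β 0 ^ 2 - β 1 ^ 2)) (gen_mem _ (by simp [Set.mem_insert_iff]))))) ((I.mul_mem_left (-(β 1 ^ 2 - β 2 ^ 2)) (gen_mem _ (by simp [Set.mem_insert_iff]))))) ((I.mul_mem_left (-(β 2 ^ 2 - β 0 ^ 2)) (gen_mem _ (by simp [Set.mem_insert_iff]))))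

lemma mem_5 : P₅ ∈ I := by
  have h : P₅ =
      (δ 0 * (β 0 ^ 2 - β 1 ^ 2)) * ((β 0 - δ 0) ^ 3 * (β 1 - δ 0) ^ 3) +
      (δ 0 * (β 1 ^ 2 - β 2 ^ 2)) * ((β 1 - δ 0) ^ 3 * (β 2 - δ 0) ^ 3) +
      (δ 0 * (β 2 ^ 2 - β 0 ^ 2)) * ((β 0 - δ 0) ^ 3 * (β 2 - δ 0) ^ 3) +
      (-(δ 1 * (β 0 ^ 2 - β 1 ^ 2))) * ((β 0 - δ 1) ^ 3 * (β 1 - δ 1) ^ 3) +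
      (-(δ 1 * (β 1 ^ 2 - β 2 ^ 2))) * ((β 1 - δ 1) ^ 3 * (β 2 - δ 1) ^ 3) +
      (-(δ 1 * (β 2 ^ 2 - β 0 ^ 2))) * ((β 0 - δ 1) ^ 3 * (β 2 - δ 1) ^ 3) := by
    simp only [P₅, Δ, Fin.sum_univ_three, f31, f32, f33, f34, f35, f36]
    ring
  rw [h]
  exact add_mem (add_mem (add_mem (add_mem (add_mem ((I.mul_mem_left (δ 0 * (β 0 ^ 2 - β 1 ^ 2)) (gen_mem _ (by simp [Set.mem_insert_iff])))) ((I.mul_mem_left (δ 0 * (β 1 ^ 2 - β 2 ^ 2)) (gen_mem _ (by simp [Set.mem_insert_iff]))))) ((I.mul_mem_left (δ 0 * (β 2 ^ 2 - β 0 ^ 2)) (gen_mem _ (by simp [Set.mem_insert_iff]))))) ((I.mul_mem_left (-(δ 1 * (β 0 ^ 2 - β 1 ^ 2))) (gen_mem _ (by simp [Set.mem_insert_iff]))))) ((I.mul_mem_left (-(δ 1 * (β 1 ^ 2 - β 2 ^ 2))) (gen_mem _ (by simp [Set.mem_insert_iff]))))) ((I.mul_mem_left (-(δ 1 * (β 2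 ^ 2 - β 0 ^ 2))) (gen_mem _ (by simp [Set.mem_insert_iff]))))

lemma mem_6 : P₆ ∈ I := by
  have h : P₆ =
      ((β 0 - β 1) * (δ 0 - δ 1)) * ((β 2 - δ 0) ^ 3 * (β 2 - δ 1) ^ 3) +
      ((β 1 - β 2) * (δ 0 - δ 1)) * ((β 0 - δ 0) ^ 3 * (β 0 - δ 1) ^ 3) +
      ((β 2 - β 0) * (δ 0 - δ 1)) * ((β 1 - δ 0) ^ 3 * (β 1 - δ 1) ^ 3) := by
    simp only [P₆, Δ, Fin.sum_univ_three, f31, f32, f33, f34, f35, f36]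
    ring
  rw [h]
  exact add_mem (add_mem ((I.mul_mem_left ((β 0 - β 1) * (δ 0 - δ 1)) (gen_mem _ (by simp [Set.mem_insert_iff])))) ((I.mul_mem_left ((β 1 - β 2) * (δ 0 - δ 1)) (gen_mem _ (by simp [Set.mem_insert_iff]))))) ((I.mul_mem_left ((β 2 - β 0) * (δ 0 - δ 1)) (gen_mem _ (by simp [Set.mem_insert_iff]))))

lemma mem_7 : P₇ ∈ I := by
  have h : P₇ =
      ((β 0 - β 1) * (β 1 - β 2) * (β 2 - β 0)) * ((β 0 - δ 0) ^ 3 * (β 1 - δ 0) ^ 3) +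
      ((β 0 - β 1) * (β 1 - β 2) * (β 2 - β 0)) * ((β 1 - δ 0) ^ 3 * (β 2 - δ 0) ^ 3) +
      ((β 0 - β 1) * (β 1 - β 2) * (β 2 - β 0)) * ((β 0 - δ 0) ^ 3 * (β 2 - δ 0) ^ 3) +
      (-((β 0 - β 1) * (β 1 - β 2) * (β 2 - β 0))) * ((β 0 - δ 1) ^ 3 * (β 1 - δ 1) ^ 3) +
      (-((β 0 - β 1) * (β 1 - β 2) * (β 2 - β 0))) * ((β 1 - δ 1) ^ 3 * (β 2 - δ 1) ^ 3) +
      (-((β 0 - β 1) * (β 1 - β 2) * (β 2 - β 0))) * ((β 0 - δ 1) ^ 3 * (β 2 - δ 1) ^ 3) := by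
    simp only [P₇, Δ, Fin.sum_univ_three, f31, f32, f33, f34, f35, f36]
    ring
  rw [h]
  exact add_mem (add_mem (add_mem (add_mem (add_mem ((I.mul_mem_left ((β 0 - β 1) * (β 1 - β 2) * (β 2 - β 0)) (gen_mem _ (by simp [Set.mem_insert_iff])))) ((I.mul_mem_left ((β 0 - β 1) * (β 1 - β 2) * (β 2 - β 0)) (gen_mem _ (by simp [Set.mem_insert_iff]))))) ((I.mul_mem_left ((β 0 - β 1) * (β 1 - β 2) * (β 2 - β 0)) (gen_mem _ (by simp [Set.mem_insert_iff]))))) ((I.mul_mem_left (-((β 0 - β 1) * (β 1 - β 2) * (β 2 - β 0))) (gen_mem _ (by simp [Set.mem_insert_iff]))))) ((I.mul_mem_left (-((β 0 - β 1) * (β 1 - β 2) * (β 2 - β 0))) (gen_mem _ (by simp [Set.mem_insert_iff]))))) ((I.mul_mem_left (-((β 0 - β 1) * (β 1 - β 2) * (β 2 - β 0))) (gen_mem _ (by simp [Set.mem_insert_iff]))))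

/-- Each of the seven polynomials P₁,…,P₇ lies in the ideal I, is anti-invariant under
the Weyl group W = S₃ × S₂ (acting by permuting the β's and the δ's separately), and is
divisible by Δ. -/
theorem each_P_in_ideal_antiinvariant_divisible :
    ∀ P ∈ ({P₁, P₂, P₃, P₄, P₅, P₆, P₇} : Set P5),
      P ∈ I ∧
      (∀ (σ : Equiv.Perm (Fin 3)) (τ : Equiv.Perm (Fin 2)),
        rename (Sum.map ⇑σ ⇑τ) P =
          ((Equiv.Perm.sign σ * Equiv.Perm.sign τ : ℤˣ) : ℤ) • P) ∧
      Δ ∣ P := by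
  intro P hP
  simp only [Set.mem_insert_iff, Set.mem_singleton_iff] at hP
  rcases hP with rfl | rfl | rfl | rfl | rfl | rfl | rfl
  · exact ⟨mem_1, fun σ τ => anti_1 σ τ, div_1⟩
  · exact ⟨mem_2, fun σ τ => anti_2 σ τ, div_2⟩
  · exact ⟨mem_3, fun σ τ => anti_3 σ τ, div_3⟩
  · exact ⟨mem_4, fun σ τ => anti_4 σ τ, div_4⟩
  · exact ⟨mem_5, fun σ τ => anti_5 σ τ, div_5⟩
  · exact ⟨mem_6, fun σ τ => anti_6 σ τ, div_6⟩
  · exact ⟨mem_7, fun σ τ => anti_7 σ τ, div_7⟩
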